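/- Assume G satisfies the U-Hypothesis with respect to ℕ; set N̄ := N∖ℕ and U := {n ∈ ℕ : n⁻¹ ∈ ℕ}, and let Γ := N/U be the quotient group (U is normal in N). Then the relation on Γ defined by Ua < Ub if and only if Ua ≠ Ub and ba⁻¹ ∈ N̄ is well defined (independent of coset representatives) and is a linear order on Γ; it is compatible with multiplication, i.e., Ua ≤ Uc and Ub ≤ Ud imply U(ab) ≤ U(cd); and for all Ua ≠ Ub in Γ, the setwise sum Ua + Ub is contained in N and equals min{Ua, Ub} as a subset of N. -/

import Mathlib

open scoped Pointwise

/-- The subset of `D` consisting of (the values of) the units belonging to `N`. -/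
def unitsSet {D : Type*} [DivisionRing D] (N : Subgroup Dˣ) : Set D :=
  Units.val '' (N : Set Dˣ)

/-- For `a : D`, the set `N(a) = {n ∈ N : a + n ∈ N}`. -/
def nSet {D : Type*} [DivisionRing D] (N : Subgroup Dˣ) (a : D) : Set D :=
  {x : D | x ∈ unitsSet N ∧ a + x ∈ unitsSet N}

/-- The commuting graph of a group: vertices are the nonidentity elements,
two distinct nonidentity elements are adjacent iff they commute. (The identity is
an isolated vertex.) -/
def commGraph (Q : Type*) [Group Q] : SimpleGraph Q where
  Adj a b := a ≠ b ∧ a ≠ 1 ∧ b ≠ 1 ∧ a * b = b * a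
  symm := by
    refine ⟨?_⟩
    intro a b h
    exact ⟨Ne.symm h.1, h.2.2.1, h.2.1, h.2.2.2.symm⟩
  loopless := by refine ⟨?_⟩; intro a h; exact h.1 rfl

/-- `distGT Γ u v k` : there is no path (walk) of length at most `k` from `u` to `v`,
i.e. `d(u,v) > k`. -/
def distGT {Q : Type*} (Γ : SimpleGraph Q) (u v : Q) (k : ℕ) : Prop :=
  ∀ p : Γ.Walk u v, k < p.length

/-- `G` satisfies the *U-Hypothesis* with respect to `S`: `S` is a conjugation-invariant
subset of `G` with `∅ ≠ S ⊊ N` such that (U1) `1, −1 ∈ S`; (U2) `S·S = S`;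
(U3) for all `n̄ ∈ N∖S`, `n̄ + 1 ∈ S` and `n̄ − 1 ∈ N`. -/
def UHyp {D : Type*} [DivisionRing D] (N : Subgroup Dˣ) (S : Set D) : Prop :=
  (∀ g : Dˣ, (fun t => (g : D)⁻¹ * t * (g : D)) '' S = S) ∧
  S.Nonempty ∧ S ⊂ unitsSet N ∧
  (1 : D) ∈ S ∧ (-1 : D) ∈ S ∧
  S * S = S ∧
  (∀ t ∈ unitsSet N \ S, t + 1 ∈ S ∧ t - 1 ∈ unitsSet N)

/-!
The point of (U3) is that `N̄⁻¹ ⊆ S`: if `m ∈ N̄` had `m⁻¹ ∉ S`, then `t = m⁻¹ + 1 ∈ S`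
satisfies `m + 1 = m t`, so `t⁻¹ ∉ S`, hence `1 - t⁻¹ ∈ S` by (U3) applied to `t⁻¹`, and
`m⁻¹ = t (1 - t⁻¹) ∈ S`. Consequently every element of `N` lies in exactly one of `U`, `N̄`,
`N̄⁻¹`, the set `N̄` is closed under products and under multiplication by `U` on either side,
and `U + N̄ ⊆ U`. The order on cosets is then the trichotomy `ba⁻¹ ∈ U, N̄, N̄⁻¹`, with
`Ua ≤ Ub ↔ ab⁻¹ ∈ S`, so that compatibility with products follows from `S S = S` and the
conjugation invariance of `S`; and `ua + vb = (u + v ba⁻¹) a` gives `Ua + Ub = Ua` when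
`ba⁻¹ ∈ N̄`.
-/

theorem image_mul_right_eq_image_mul_right_iff {G₀ : Type*} [GroupWithZero G₀] {U : Set G₀}
    (one_mem : (1 : G₀) ∈ U) (mul_mem : ∀ x ∈ U, ∀ y ∈ U, x * y ∈ U)
    (inv_mem : ∀ x ∈ U, x⁻¹ ∈ U) {a b : G₀} (ha : a ≠ 0) (hb : b ≠ 0) :
    (fun u => u * a) '' U = (fun u => u * b) '' U ↔ b * a⁻¹ ∈ U := by
  constructor
  · intro h
    obtain ⟨u, hu, hub⟩ : b ∈ (fun u => u * a) '' U := h ▸ ⟨1, one_mem, one_mul b⟩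
    rwa [← hub, mul_inv_cancel_right₀ ha]
  · intro h
    ext x
    constructor
    · rintro ⟨w, hw, rfl⟩
      exact ⟨w * (b * a⁻¹)⁻¹, mul_mem _ hw _ (inv_mem _ h), by simp [mul_assoc, hb]⟩
    · rintro ⟨v, hv, rfl⟩
      exact ⟨v * (b * a⁻¹), mul_mem _ hv _ h, by simp [mul_assoc, ha]⟩

section

variable {D : Type*} [DivisionRing D] {N : Subgroup Dˣ} {S : Set D}
  {a a' b b' c d m n u v x y : D}

theorem ne_zero_of_mem_unitsSet (hx : x ∈ unitsSet N) : x ≠ 0 := by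
  obtain ⟨x, -, rfl⟩ := hx
  exact x.ne_zero

theorem mul_mem_unitsSet (hx : x ∈ unitsSet N) (hy : y ∈ unitsSet N) :
    x * y ∈ unitsSet N := by
  obtain ⟨x, hx, rfl⟩ := hx
  obtain ⟨y, hy, rfl⟩ := hy
  exact ⟨x * y, N.mul_mem hx hy, rfl⟩

theorem inv_mem_unitsSet (hx : x ∈ unitsSet N) : x⁻¹ ∈ unitsSet N := by
  obtain ⟨x, hx, rfl⟩ := hx
  exact ⟨x⁻¹, N.inv_mem hx, x.val_inv_eq_inv_val⟩

def unitsOfSet (S : Set D) : Set D := {t | t ∈ S ∧ t⁻¹ ∈ S}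

theorem inv_mem_unitsOfSet (hu : u ∈ unitsOfSet S) : u⁻¹ ∈ unitsOfSet S :=
  ⟨hu.2, by rw [inv_inv]; exact hu.1⟩

theorem mem_diff_or_inv_mem_diff (hx : x ∈ unitsSet N) (hxS : x ∉ unitsOfSet S) :
    x ∈ unitsSet N \ S ∨ x⁻¹ ∈ unitsSet N \ S := by
  by_cases h : x ∈ S
  · exact Or.inr ⟨inv_mem_unitsSet hx, fun h' => hxS ⟨h, h'⟩⟩
  · exact Or.inl ⟨hx, h⟩

def coset (S : Set D) (a : D) : Set D := (fun u => u * a) '' unitsOfSet S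

/-- `coset S a` is the coset `Ua` of the paper, and `cosetLT N S a b` is `Ua < Ub`. -/
def cosetLT (N : Subgroup Dˣ) (S : Set D) (a b : D) : Prop :=
  coset S a ≠ coset S b ∧ b * a⁻¹ ∈ unitsSet N \ S

namespace UHyp

theorem subset_unitsSet (hS : UHyp N S) : S ⊆ unitsSet N := hS.2.2.1.1

theorem ne_zero (hS : UHyp N S) (hx : x ∈ S) : x ≠ 0 :=
  ne_zero_of_mem_unitsSet (hS.subset_unitsSet hx)

theorem one_mem (hS : UHyp N S) : (1 : D) ∈ S := hS.2.2.2.1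

theorem neg_one_mem (hS : UHyp N S) : (-1 : D) ∈ S := hS.2.2.2.2.1

theorem mul_mem (hS : UHyp N S) (hx : x ∈ S) (hy : y ∈ S) : x * y ∈ S :=
  hS.2.2.2.2.2.1 ▸ Set.mul_mem_mul hx hy

theorem conj_mem (hS : UHyp N S) (hc : c ≠ 0) (hx : x ∈ S) : c * x * c⁻¹ ∈ S := by
  rw [← hS.1 (Units.mk0 c hc)⁻¹]
  exact ⟨x, hx, by simp⟩

theorem add_one_mem (hS : UHyp N S) (hm : m ∈ unitsSet N \ S) : m + 1 ∈ S :=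
  (hS.2.2.2.2.2.2 m hm).1

theorem sub_one_mem (hS : UHyp N S) (hm : m ∈ unitsSet N \ S) : m - 1 ∈ S := by
  by_contra h
  have h' := hS.add_one_mem ⟨(hS.2.2.2.2.2.2 m hm).2, h⟩
  rw [sub_add_cancel] at h'
  exact hm.2 h'

theorem one_sub_inv_mem (hS : UHyp N S) (hx : x ∈ S) (hx' : x⁻¹ ∉ S) : 1 - x⁻¹ ∈ S := by
  have h := hS.mul_mem hS.neg_one_mem
    (hS.sub_one_mem ⟨inv_mem_unitsSet (hS.subset_unitsSet hx), hx'⟩)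
  rwa [neg_one_mul, neg_sub] at h

theorem inv_mem_of_mem_diff (hS : UHyp N S) (hm : m ∈ unitsSet N \ S) : m⁻¹ ∈ S := by
  by_contra h
  have hm0 := ne_zero_of_mem_unitsSet hm.1
  set t := m⁻¹ + 1 with ht_def
  have ht : t ∈ S := hS.add_one_mem ⟨inv_mem_unitsSet hm.1, h⟩
  have ht0 := hS.ne_zero ht
  have ht' : t⁻¹ ∉ S := by
    intro ht'
    have hmt : m + 1 = m * t := by rw [mul_add, mul_inv_cancel₀ hm0, mul_one, add_comm]
    have h' := hS.mul_mem (hS.add_one_mem hm) ht'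
    rw [hmt, mul_inv_cancel_right₀ ht0] at h'
    exact hm.2 h'
  have h' := hS.mul_mem ht (hS.one_sub_inv_mem ht ht')
  rw [mul_sub, mul_one, mul_inv_cancel₀ ht0, ht_def, add_sub_cancel_right] at h'
  exact h h'

theorem inv_add_one_mem (hS : UHyp N S) (hm : m ∈ unitsSet N \ S) : (m + 1)⁻¹ ∈ S := by
  by_contra h
  have ht0 := hS.ne_zero (hS.add_one_mem hm)
  have h' := hS.mul_mem (hS.one_sub_inv_mem (hS.add_one_mem hm) h) (hS.inv_mem_of_mem_diff hm)
  have hsub : (m + 1)⁻¹ * m = 1 - (m + 1)⁻¹ := by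
    calc (m + 1)⁻¹ * m = (m + 1)⁻¹ * (m + 1 - 1) := by rw [add_sub_cancel_right]
      _ = 1 - (m + 1)⁻¹ := by rw [mul_sub, inv_mul_cancel₀ ht0, mul_one]
  rw [← hsub, mul_inv_cancel_right₀ (ne_zero_of_mem_unitsSet hm.1)] at h'
  exact h h'


theorem one_mem_unitsOfSet (hS : UHyp N S) : (1 : D) ∈ unitsOfSet S :=
  ⟨hS.one_mem, by rw [inv_one]; exact hS.one_mem⟩

theorem neg_one_mem_unitsOfSet (hS : UHyp N S) : (-1 : D) ∈ unitsOfSet S :=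
  ⟨hS.neg_one_mem, by rw [inv_neg, inv_one]; exact hS.neg_one_mem⟩

theorem mul_mem_unitsOfSet (hS : UHyp N S) (hu : u ∈ unitsOfSet S) (hv : v ∈ unitsOfSet S) :
    u * v ∈ unitsOfSet S :=
  ⟨hS.mul_mem hu.1 hv.1, by rw [mul_inv_rev]; exact hS.mul_mem hv.2 hu.2⟩

theorem add_one_mem_unitsOfSet (hS : UHyp N S) (hm : m ∈ unitsSet N \ S) :
    m + 1 ∈ unitsOfSet S :=
  ⟨hS.add_one_mem hm, hS.inv_add_one_mem hm⟩

theorem mul_mem_diff_of_mem_unitsOfSet_left (hS : UHyp N S) (hu : u ∈ unitsOfSet S)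
    (hm : m ∈ unitsSet N \ S) : u * m ∈ unitsSet N \ S := by
  refine ⟨mul_mem_unitsSet (hS.subset_unitsSet hu.1) hm.1, fun h => hm.2 ?_⟩
  simpa [hS.ne_zero hu.1] using hS.mul_mem hu.2 h

theorem mul_mem_diff_of_mem_unitsOfSet_right (hS : UHyp N S) (hm : m ∈ unitsSet N \ S)
    (hu : u ∈ unitsOfSet S) : m * u ∈ unitsSet N \ S := by
  refine ⟨mul_mem_unitsSet hm.1 (hS.subset_unitsSet hu.1), fun h => hm.2 ?_⟩
  simpa [hS.ne_zero hu.1] using hS.mul_mem h hu.2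

theorem mul_mul_mem_diff_iff (hS : UHyp N S) (hu : u ∈ unitsOfSet S) (hv : v ∈ unitsOfSet S) :
    u * m * v ∈ unitsSet N \ S ↔ m ∈ unitsSet N \ S := by
  refine ⟨fun h => ?_, fun h => hS.mul_mem_diff_of_mem_unitsOfSet_right
    (hS.mul_mem_diff_of_mem_unitsOfSet_left hu h) hv⟩
  have h' := hS.mul_mem_diff_of_mem_unitsOfSet_right
    (hS.mul_mem_diff_of_mem_unitsOfSet_left (inv_mem_unitsOfSet hu) h) (inv_mem_unitsOfSet hv)
  simpa [mul_assoc, hS.ne_zero hu.1, hS.ne_zero hv.1] using h'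

theorem mul_mem_diff (hS : UHyp N S) (hm : m ∈ unitsSet N \ S) (hn : n ∈ unitsSet N \ S) :
    m * n ∈ unitsSet N \ S := by
  refine ⟨mul_mem_unitsSet hm.1 hn.1, fun h => hm.2 ?_⟩
  simpa [ne_zero_of_mem_unitsSet hn.1] using hS.mul_mem h (hS.inv_mem_of_mem_diff hn)

theorem add_mem_unitsOfSet (hS : UHyp N S) (hu : u ∈ unitsOfSet S) (hm : m ∈ unitsSet N \ S) :
    u + m ∈ unitsOfSet S := by
  have h := hS.mul_mem_unitsOfSet hu
    (hS.add_one_mem_unitsOfSet (hS.mul_mem_diff_of_mem_unitsOfSet_left (inv_mem_unitsOfSet hu) hm))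
  rwa [mul_add, mul_inv_cancel_left₀ (hS.ne_zero hu.1), mul_one, add_comm] at h

theorem mem_unitsOfSet_or_mem_diff_iff (hS : UHyp N S) (hx : x ∈ unitsSet N) :
    x ∈ unitsOfSet S ∨ x ∈ unitsSet N \ S ↔ x⁻¹ ∈ S := by
  refine ⟨?_, fun h => ?_⟩
  · rintro (h | h)
    exacts [h.2, hS.inv_mem_of_mem_diff h]
  · by_cases hxS : x ∈ S
    exacts [Or.inl ⟨hxS, h⟩, Or.inr ⟨hx, hxS⟩]

theorem mul_mul_inv_mem (hS : UHyp N S) (hc : c ≠ 0) (hac : a * c⁻¹ ∈ S) (hbd : b * d⁻¹ ∈ S) :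
    a * b * (c * d)⁻¹ ∈ S := by
  have h := hS.mul_mem hac (hS.conj_mem hc hbd)
  simpa [mul_assoc, hc] using h

theorem coset_eq_coset_iff (hS : UHyp N S) (ha : a ≠ 0) (hb : b ≠ 0) :
    coset S a = coset S b ↔ b * a⁻¹ ∈ unitsOfSet S :=
  image_mul_right_eq_image_mul_right_iff hS.one_mem_unitsOfSet
    (fun _ hu _ hv => hS.mul_mem_unitsOfSet hu hv) (fun _ => inv_mem_unitsOfSet) ha hb

theorem cosetLT_iff (hS : UHyp N S) (ha : a ≠ 0) (hb : b ≠ 0) :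
    cosetLT N S a b ↔ b * a⁻¹ ∈ unitsSet N \ S := by
  rw [cosetLT, ne_eq, hS.coset_eq_coset_iff ha hb]
  exact and_iff_right_of_imp fun hm hU => hm.2 hU.1

theorem coset_eq_or_cosetLT_iff (hS : UHyp N S) (ha : a ∈ unitsSet N) (hb : b ∈ unitsSet N) :
    coset S a = coset S b ∨ cosetLT N S a b ↔ a * b⁻¹ ∈ S := by
  rw [hS.coset_eq_coset_iff (ne_zero_of_mem_unitsSet ha) (ne_zero_of_mem_unitsSet hb),
    hS.cosetLT_iff (ne_zero_of_mem_unitsSet ha) (ne_zero_of_mem_unitsSet hb),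
    hS.mem_unitsOfSet_or_mem_diff_iff (mul_mem_unitsSet hb (inv_mem_unitsSet ha)),
    mul_inv_rev, inv_inv]

theorem cosetLT_congr (hS : UHyp N S) (ha : a ≠ 0) (hb : b ≠ 0) (ha' : a' ≠ 0) (hb' : b' ≠ 0)
    (haa' : coset S a = coset S a') (hbb' : coset S b = coset S b') :
    cosetLT N S a b ↔ cosetLT N S a' b' := by
  have hu := (hS.coset_eq_coset_iff hb hb').1 hbb'
  have hv := inv_mem_unitsOfSet ((hS.coset_eq_coset_iff ha ha').1 haa')
  have h : b' * b⁻¹ * (b * a⁻¹) * (a' * a⁻¹)⁻¹ = b' * a'⁻¹ := by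
    simp [mul_assoc, ha, hb]
  rw [hS.cosetLT_iff ha hb, hS.cosetLT_iff ha' hb', ← hS.mul_mul_mem_diff_iff hu hv, h]

theorem cosetLT_or_cosetLT (hS : UHyp N S) (ha : a ∈ unitsSet N) (hb : b ∈ unitsSet N)
    (h : coset S a ≠ coset S b) : cosetLT N S a b ∨ cosetLT N S b a := by
  have ha0 := ne_zero_of_mem_unitsSet ha
  have hb0 := ne_zero_of_mem_unitsSet hb
  rw [ne_eq, hS.coset_eq_coset_iff ha0 hb0] at h
  rw [hS.cosetLT_iff ha0 hb0, hS.cosetLT_iff hb0 ha0, ← inv_inv a, ← mul_inv_rev, inv_inv]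
  exact mem_diff_or_inv_mem_diff (mul_mem_unitsSet hb (inv_mem_unitsSet ha)) h

theorem cosetLT_asymm (hS : UHyp N S) (hab : cosetLT N S a b) : ¬cosetLT N S b a := by
  rintro ⟨-, hba⟩
  have h := hS.inv_mem_of_mem_diff hab.2
  rw [mul_inv_rev, inv_inv] at h
  exact hba.2 h

theorem cosetLT_trans (hS : UHyp N S) (ha : a ≠ 0) (hb : b ≠ 0) (hc : c ≠ 0)
    (hab : cosetLT N S a b) (hbc : cosetLT N S b c) : cosetLT N S a c := by
  rw [hS.cosetLT_iff ha hb] at hab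
  rw [hS.cosetLT_iff hb hc] at hbc
  rw [hS.cosetLT_iff ha hc, show c * a⁻¹ = c * b⁻¹ * (b * a⁻¹) by simp [mul_assoc, hb]]
  exact hS.mul_mem_diff hbc hab

theorem coset_eq_or_cosetLT_mul_mul (hS : UHyp N S) (ha : a ∈ unitsSet N) (hb : b ∈ unitsSet N)
    (hc : c ∈ unitsSet N) (hd : d ∈ unitsSet N)
    (hac : coset S a = coset S c ∨ cosetLT N S a c) (hbd : coset S b = coset S d ∨ cosetLT N S b d) :
    coset S (a * b) = coset S (c * d) ∨ cosetLT N S (a * b) (c * d) := by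
  rw [hS.coset_eq_or_cosetLT_iff ha hc] at hac
  rw [hS.coset_eq_or_cosetLT_iff hb hd] at hbd
  rw [hS.coset_eq_or_cosetLT_iff (mul_mem_unitsSet ha hb) (mul_mem_unitsSet hc hd)]
  exact hS.mul_mul_inv_mem (ne_zero_of_mem_unitsSet hc) hac hbd

theorem coset_add_coset_of_mem_diff (hS : UHyp N S) (ha : a ≠ 0)
    (h : b * a⁻¹ ∈ unitsSet N \ S) : coset S a + coset S b = coset S a := by
  apply Set.Subset.antisymm
  · rintro _ ⟨_, ⟨u, hu, rfl⟩, _, ⟨v, hv, rfl⟩, rfl⟩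
    refine ⟨u + v * (b * a⁻¹),
      hS.add_mem_unitsOfSet hu (hS.mul_mem_diff_of_mem_unitsOfSet_left hv h), ?_⟩
    simp [add_mul, mul_assoc, ha]
  · rintro _ ⟨u, hu, rfl⟩
    have hneg := hS.mul_mem_diff_of_mem_unitsOfSet_left hS.neg_one_mem_unitsOfSet h
    refine ⟨(u + -1 * (b * a⁻¹)) * a, ⟨_, hS.add_mem_unitsOfSet hu hneg, rfl⟩,
      1 * b, ⟨1, hS.one_mem_unitsOfSet, rfl⟩, ?_⟩
    simp [add_mul, ha]

theorem coset_subset_unitsSet (hS : UHyp N S) (ha : a ∈ unitsSet N) :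
    coset S a ⊆ unitsSet N := by
  rintro _ ⟨u, hu, rfl⟩
  exact mul_mem_unitsSet (hS.subset_unitsSet hu.1) ha

theorem coset_add_coset_subset_unitsSet (hS : UHyp N S) (ha : a ∈ unitsSet N)
    (hb : b ∈ unitsSet N) (h : coset S a ≠ coset S b) : coset S a + coset S b ⊆ unitsSet N := by
  rcases hS.cosetLT_or_cosetLT ha hb h with hab | hba
  · rw [hS.coset_add_coset_of_mem_diff (ne_zero_of_mem_unitsSet ha) hab.2]
    exact hS.coset_subset_unitsSet ha
  · rw [add_comm, hS.coset_add_coset_of_mem_diff (ne_zero_of_mem_unitsSet hb) hba.2]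
    exact hS.coset_subset_unitsSet hb

end UHyp

end

theorem stmt_17_general {D : Type*} [DivisionRing D] (N : Subgroup Dˣ)
    (S : Set D) (hS : UHyp N S)
    (Nbar Us : Set D) (cos : D → Set D) (lt : D → D → Prop)
    (hNbar : Nbar = unitsSet N \ S)
    (hUs : Us = {t : D | t ∈ S ∧ t⁻¹ ∈ S})
    (hcos : cos = fun a => (fun u => u * a) '' Us)
    (hlt : lt = fun a b => cos a ≠ cos b ∧ b * a⁻¹ ∈ Nbar) :
    -- the relation is independent of the choice of coset representatives
    (∀ a ∈ unitsSet N, ∀ b ∈ unitsSet N, ∀ a' ∈ unitsSet N, ∀ b' ∈ unitsSet N,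
      cos a = cos a' → cos b = cos b' → (lt a b ↔ lt a' b')) ∧
    -- totality
    (∀ a ∈ unitsSet N, ∀ b ∈ unitsSet N, cos a ≠ cos b → (lt a b ∨ lt b a)) ∧
    -- asymmetry
    (∀ a ∈ unitsSet N, ∀ b ∈ unitsSet N, ¬ (lt a b ∧ lt b a)) ∧
    -- transitivity
    (∀ a ∈ unitsSet N, ∀ b ∈ unitsSet N, ∀ c ∈ unitsSet N,
      lt a b → lt b c → lt a c) ∧
    -- compatibility with multiplication: Ua ≤ Uc and Ub ≤ Ud imply U(ab) ≤ U(cd)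
    (∀ a ∈ unitsSet N, ∀ b ∈ unitsSet N, ∀ c ∈ unitsSet N, ∀ d ∈ unitsSet N,
      (cos a = cos c ∨ lt a c) → (cos b = cos d ∨ lt b d) →
      (cos (a * b) = cos (c * d) ∨ lt (a * b) (c * d))) ∧
    -- the setwise sum of two distinct cosets lies in N and equals the minimum
    (∀ a ∈ unitsSet N, ∀ b ∈ unitsSet N, cos a ≠ cos b →
      cos a + cos b ⊆ unitsSet N ∧
      (lt a b → cos a + cos b = cos a) ∧
      (lt b a → cos a + cos b = cos b)) := by
  obtain rfl : Us = unitsOfSet S := hUs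
  obtain rfl : cos = coset S := hcos
  subst hNbar
  obtain rfl : lt = cosetLT N S := hlt
  have hne {x : D} (hx : x ∈ unitsSet N) : x ≠ 0 := ne_zero_of_mem_unitsSet hx
  refine ⟨fun a ha b hb a' ha' b' hb' => hS.cosetLT_congr (hne ha) (hne hb) (hne ha') (hne hb'),
    fun a ha b hb => hS.cosetLT_or_cosetLT ha hb,
    fun a _ b _ h => hS.cosetLT_asymm h.1 h.2,
    fun a ha b hb c hc => hS.cosetLT_trans (hne ha) (hne hb) (hne hc),
    fun a ha b hb c hc d hd => hS.coset_eq_or_cosetLT_mul_mul ha hb hc hd,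
    fun a ha b hb h => ⟨hS.coset_add_coset_subset_unitsSet ha hb h,
      fun hab => hS.coset_add_coset_of_mem_diff (hne ha) hab.2, fun hba => ?_⟩⟩
  rw [add_comm]
  exact hS.coset_add_coset_of_mem_diff (hne hb) hba.2

/-- With `U = {n ∈ S : n⁻¹ ∈ S}` (a normal subgroup of `G`
contained in `N`), consider the cosets `Ua` (for `a ∈ N`), i.e. the elements of
`Γ = N/U`, and the relation `Ua < Ub ↔ Ua ≠ Ub ∧ ba⁻¹ ∈ N̄`. This relation is
well defined on cosets, is a (strict) linear order on `Γ`, is compatible with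
multiplication, and for `Ua ≠ Ub` the setwise sum `Ua + Ub` is contained in `N`
and equals `min{Ua, Ub}`. -/
theorem stmt_17 {D : Type*} [DivisionRing D] [Infinite D] (N : Subgroup Dˣ)
    [N.Normal] (hF : ∀ x : Dˣ, (x : D) ∈ Set.center D → x ∈ N)
    (hfin : Finite (Dˣ ⧸ N))
    (S : Set D) (hS : UHyp N S)
    (Nbar Us : Set D) (cos : D → Set D) (lt : D → D → Prop)
    (hNbar : Nbar = unitsSet N \ S)
    (hUs : Us = {t : D | t ∈ S ∧ t⁻¹ ∈ S})
    (hcos : cos = fun a => (fun u => u * a) '' Us)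
    (hlt : lt = fun a b => cos a ≠ cos b ∧ b * a⁻¹ ∈ Nbar) :
    -- the relation is independent of the choice of coset representatives
    (∀ a ∈ unitsSet N, ∀ b ∈ unitsSet N, ∀ a' ∈ unitsSet N, ∀ b' ∈ unitsSet N,
      cos a = cos a' → cos b = cos b' → (lt a b ↔ lt a' b')) ∧
    -- totality
    (∀ a ∈ unitsSet N, ∀ b ∈ unitsSet N, cos a ≠ cos b → (lt a b ∨ lt b a)) ∧
    -- asymmetry
    (∀ a ∈ unitsSet N, ∀ b ∈ unitsSet N, ¬ (lt a b ∧ lt b a)) ∧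
    -- transitivity
    (∀ a ∈ unitsSet N, ∀ b ∈ unitsSet N, ∀ c ∈ unitsSet N,
      lt a b → lt b c → lt a c) ∧
    -- compatibility with multiplication: Ua ≤ Uc and Ub ≤ Ud imply U(ab) ≤ U(cd)
    (∀ a ∈ unitsSet N, ∀ b ∈ unitsSet N, ∀ c ∈ unitsSet N, ∀ d ∈ unitsSet N,
      (cos a = cos c ∨ lt a c) → (cos b = cos d ∨ lt b d) →
      (cos (a * b) = cos (c * d) ∨ lt (a * b) (c * d))) ∧
    -- the setwise sum of two distinct cosets lies in N and equals the minimum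
    (∀ a ∈ unitsSet N, ∀ b ∈ unitsSet N, cos a ≠ cos b →
      cos a + cos b ⊆ unitsSet N ∧
      (lt a b → cos a + cos b = cos a) ∧
      (lt b a → cos a + cos b = cos b)) :=
  stmt_17_general N S hS Nbar Us cos lt hNbar hUs hcos hlt
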